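/- arXiv:1412.2237 — 2 statements merged into one kernel-verified Lean document; each statement's English description precedes it below -/
import Mathlib

section
/- For any integers $U, V \geq 1$ and any integer $n > \max\{U, V\}$, the Möbius function satisfies $\mu(n) = -\sum_{\substack{lmd=n \\ 1\leq d\leq V,\ 1\leq m\leq U}} \mu(d)\mu(m) + \sum_{\substack{lmd=n \\ d>V,\ m>U}} \mu(d)\mu(m)$, where the sums range over triples $(l,m,d)$ of positive integers with $lmd = n$ subject to the indicated constraints. -/
/-!
Expanding `μ = μ * (μ * ζ)` gives `μ n = ∑_{d m ∣ n} μ(d) μ(m)`. Split the pairs `(d, m)` by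
`1 = [d ≤ V] + [m ≤ U] - [d ≤ V ∧ m ≤ U] + [V < d ∧ U < m]`. The pairs with `d ≤ V` contribute
`∑_{d ≤ V} μ(d) ∑_{m ∣ n/d} μ(m) = 0`, as `n / d ≠ 1` when `d ≤ V < n`; symmetrically the pairs
with `m ≤ U` contribute nothing, which leaves the two terms of the identity.
-/

open Finset ArithmeticFunction
open scoped ArithmeticFunction.Moebius ArithmeticFunction.zeta

namespace Nat

theorem mem_divisors_and_mem_divisors_div_iff {n d m : ℕ} :
    d ∈ n.divisors ∧ m ∈ (n / d).divisors ↔ d * m ∣ n ∧ n ≠ 0 := by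
  simp only [mem_divisors]
  constructor
  · rintro ⟨⟨hd, hn⟩, hm, -⟩
    exact ⟨(Nat.dvd_div_iff_mul_dvd hd).mp hm, hn⟩
  · rintro ⟨hdm, hn⟩
    have hd : d ∣ n := (dvd_mul_right d m).trans hdm
    exact ⟨⟨hd, hn⟩, (Nat.dvd_div_iff_mul_dvd hd).mpr hdm,
      (div_ne_zero_iff_of_dvd hd).mpr ⟨hn, ne_zero_of_dvd_ne_zero hn hd⟩⟩

theorem sum_divisors_sum_divisors_div_comm {M : Type*} [AddCommMonoid M] (n : ℕ)
    (f : ℕ → ℕ → M) :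
    ∑ d ∈ n.divisors, ∑ m ∈ (n / d).divisors, f d m =
      ∑ m ∈ n.divisors, ∑ d ∈ (n / m).divisors, f d m :=
  sum_comm' fun d m => by
    rw [mem_divisors_and_mem_divisors_div_iff, and_comm (a := d ∈ _),
      mem_divisors_and_mem_divisors_div_iff, mul_comm]

end Nat

namespace ArithmeticFunction

theorem sum_divisors_moebius_eq_zero {k : ℕ} (hk : k ≠ 1) : ∑ m ∈ k.divisors, (μ m : ℤ) = 0 := by
  rw [← coe_mul_zeta_apply, moebius_mul_coe_zeta, one_apply_ne hk]

theorem sum_divisors_sum_divisors_div_moebius_mul_moebius (n : ℕ) :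
    ∑ d ∈ n.divisors, ∑ m ∈ (n / d).divisors, (μ d : ℤ) * μ m = μ n :=
  calc ∑ d ∈ n.divisors, ∑ m ∈ (n / d).divisors, (μ d : ℤ) * μ m
      = ∑ d ∈ n.divisors, (μ d : ℤ) * (μ * ζ : ArithmeticFunction ℤ) (n / d) := by
        simp only [← mul_sum, coe_mul_zeta_apply]
    _ = (μ * (μ * ζ) : ArithmeticFunction ℤ) n := by
        rw [mul_apply, Nat.sum_divisorsAntidiagonal fun d e => (μ d : ℤ) * (μ * ζ : _) e]
    _ = μ n := by rw [moebius_mul_coe_zeta, mul_one]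

theorem sum_divisors_sum_divisors_div_ite_le_moebius_mul_moebius {n V : ℕ} (hV : V < n) :
    ∑ d ∈ n.divisors, ∑ m ∈ (n / d).divisors,
      (if d ≤ V then (μ d : ℤ) * μ m else 0) = 0 := by
  refine sum_eq_zero fun d hd => ?_
  split_ifs with hdV
  · have hnd : n / d ≠ 1 := fun h =>
      (Nat.eq_of_dvd_of_div_eq_one (Nat.dvd_of_mem_divisors hd) h ▸ hdV).not_gt hV
    rw [← mul_sum, sum_divisors_moebius_eq_zero hnd, mul_zero]
  · exact sum_const_zero

end ArithmeticFunction

theorem vaughan_identity_moebius_general (U V n : ℕ)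
    (hn : max U V < n) :
    (moebius n : ℤ) =
      -(∑ d ∈ n.divisors, ∑ m ∈ (n / d).divisors,
          if 1 ≤ d ∧ d ≤ V ∧ 1 ≤ m ∧ m ≤ U then moebius d * moebius m else 0)
      + ∑ d ∈ n.divisors, ∑ m ∈ (n / d).divisors,
          if V < d ∧ U < m then moebius d * moebius m else 0 := by
  have hd_small := sum_divisors_sum_divisors_div_ite_le_moebius_mul_moebius
    ((le_max_right U V).trans_lt hn)
  have hm_small : ∑ d ∈ n.divisors, ∑ m ∈ (n / d).divisors,
      (if m ≤ U then (μ d : ℤ) * μ m else 0) = 0 := by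
    rw [Nat.sum_divisors_sum_divisors_div_comm]
    simpa only [mul_comm] using
      sum_divisors_sum_divisors_div_ite_le_moebius_mul_moebius ((le_max_left U V).trans_lt hn)
  have hsplit : ∀ d ∈ n.divisors, ∀ m ∈ (n / d).divisors, (μ d : ℤ) * μ m =
      (if d ≤ V then (μ d : ℤ) * μ m else 0) + (if m ≤ U then (μ d : ℤ) * μ m else 0)
        - (if 1 ≤ d ∧ d ≤ V ∧ 1 ≤ m ∧ m ≤ U then (μ d : ℤ) * μ m else 0)
        + (if V < d ∧ U < m then (μ d : ℤ) * μ m else 0) := by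
    intro d hd m hm
    have := Nat.pos_of_mem_divisors hd
    have := Nat.pos_of_mem_divisors hm
    split_ifs <;> first | (exfalso; omega) | ring
  rw [← sum_divisors_sum_divisors_div_moebius_mul_moebius n,
    sum_congr rfl fun d hd => sum_congr rfl (hsplit d hd)]
  simp only [sum_add_distrib, sum_sub_distrib, hd_small, hm_small]
  ring

/-- Vaughan's identity for the Möbius function. -/
theorem vaughan_identity_moebius (U V n : ℕ) (hU : 1 ≤ U) (hV : 1 ≤ V)
    (hn : max U V < n) :
    (moebius n : ℤ) =
      -(∑ d ∈ n.divisors, ∑ m ∈ (n / d).divisors,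
          if 1 ≤ d ∧ d ≤ V ∧ 1 ≤ m ∧ m ≤ U then moebius d * moebius m else 0)
      + ∑ d ∈ n.divisors, ∑ m ∈ (n / d).divisors,
          if V < d ∧ U < m then moebius d * moebius m else 0 :=
  vaughan_identity_moebius_general U V n hn
end

section
/- Let $k \geq 3$ and let $x, y$ be reals with $2 \leq y \leq x$. Suppose $\alpha = a/q + \lambda$ with $\gcd(a,q)=1$, $q \geq 1$. Then $|S_k(x,y;\alpha)| \ll q^{1-1/k+\varepsilon} \sum_{d \mid q} \max_{\chi \bmod q/d} \Big| \sum_{x/d < m \leq (x+y)/d,\ \gcd(m,q)=1} \mu(m)\chi(m) e(m^k d^k \lambda) \Big|$, where $S_k(x,y;\alpha) = \sum_{x < n \leq x+y} \mu(n) e(n^k \alpha)$ and the inner maximum is over Dirichlet characters modulo $q/d$, with absolute implied constant (depending on $\varepsilon$). -/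
/-! Write `n = d m` with `d = gcd(n, q)`; as `μ` vanishes off the squarefree numbers, `m` is
coprime to `q`. Since `(d m)^k a / q = d^(k-1) a m^k / (q/d)`, the factor `e((d m)^k a / q)` is a
function of `m` modulo `q/d` of modulus one. Expanding it in Dirichlet characters modulo `q/d`,
Parseval and Cauchy–Schwarz bound the `ℓ¹`-norm of its coefficients by `√φ(q/d) ≤ √q`, and
`√q ≤ q^(1 - 1/k + ε)` as soon as `k ≥ 2`. -/

open Finset ArithmeticFunction

/-- `e(z) = exp(2 π i z)` -/
noncomputable def e (z : ℝ) : ℂ := Complex.exp (2 * Real.pi * Complex.I * z)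

lemma e_add (s t : ℝ) : e (s + t) = e s * e t := by
  rw [e, e, e, ← Complex.exp_add]; push_cast; ring_nf

lemma e_intCast_div (j : ℤ) (N : ℕ) [NeZero N] : e (j / N) = ZMod.toCircle (j : ZMod N) := by
  rw [ZMod.toCircle_intCast, e]; push_cast; ring_nf

namespace DirichletCharacter

lemma conj_apply_unit {N : ℕ} (χ : DirichletCharacter ℂ N) (u : (ZMod N)ˣ) :
    starRingEnd ℂ (χ u) = χ (u : ZMod N)⁻¹ := by
  simp [ZMod.inv_coe_unit, ← RCLike.star_def, MulChar.star_apply', MulChar.inv_apply]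

variable {N : ℕ} [NeZero N]

noncomputable def fourierCoeff (F : ZMod N → ℂ) (χ : DirichletCharacter ℂ N) : ℂ :=
  (N.totient : ℂ)⁻¹ * ∑ u : (ZMod N)ˣ, F u * χ (u : ZMod N)⁻¹

theorem sum_fourierCoeff_mul_apply (F : ZMod N → ℂ) {b : ZMod N} (hb : IsUnit b) :
    ∑ χ : DirichletCharacter ℂ N, fourierCoeff F χ * χ b = F b := by
  obtain ⟨v, rfl⟩ := hb
  have hφ : (N.totient : ℂ) ≠ 0 := by exact_mod_cast (Nat.totient_pos.mpr (NeZero.pos N)).ne'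
  calc ∑ χ : DirichletCharacter ℂ N, fourierCoeff F χ * χ v
      = (N.totient : ℂ)⁻¹ * ∑ u : (ZMod N)ˣ, F u *
          ∑ χ : DirichletCharacter ℂ N, χ (u : ZMod N)⁻¹ * χ v := by
        simp only [fourierCoeff, mul_sum, sum_mul, mul_assoc]
        exact sum_comm
    _ = (N.totient : ℂ)⁻¹ * (F v * N.totient) := by
        simp only [sum_char_inv_mul_char_eq ℂ (Units.isUnit _), mul_ite, mul_zero, Units.val_inj]
        simp
    _ = F v := by field_simp

theorem sum_norm_fourierCoeff_sq (F : ZMod N → ℂ) :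
    ∑ χ : DirichletCharacter ℂ N, ‖fourierCoeff F χ‖ ^ 2
      = (N.totient : ℝ)⁻¹ * ∑ u : (ZMod N)ˣ, ‖F u‖ ^ 2 := by
  apply Complex.ofReal_injective
  push_cast
  simp only [← Complex.mul_conj']
  calc ∑ χ : DirichletCharacter ℂ N, fourierCoeff F χ * starRingEnd ℂ (fourierCoeff F χ)
      = (N.totient : ℂ)⁻¹ * ∑ u : (ZMod N)ˣ, F u *
          ∑ χ : DirichletCharacter ℂ N, χ (u : ZMod N)⁻¹ * starRingEnd ℂ (fourierCoeff F χ) := by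
        simp only [fourierCoeff, mul_sum, sum_mul, mul_assoc]
        exact sum_comm
    _ = (N.totient : ℂ)⁻¹ * ∑ u : (ZMod N)ˣ, F u * starRingEnd ℂ (F u) := by
        congr 1
        refine sum_congr rfl fun u _ => congrArg (F u * ·) ?_
        rw [← sum_fourierCoeff_mul_apply F u.isUnit, map_sum]
        simp only [map_mul, conj_apply_unit, mul_comm]
    _ = _ := by simp [Complex.mul_conj']

theorem sum_norm_fourierCoeff_le_sqrt_totient {F : ZMod N → ℂ} (hF : ∀ u : (ZMod N)ˣ, ‖F u‖ ≤ 1) :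
    ∑ χ : DirichletCharacter ℂ N, ‖fourierCoeff F χ‖ ≤ √(N.totient : ℝ) := by
  have hcard : (Fintype.card (DirichletCharacter ℂ N) : ℝ) = N.totient := by
    rw [← Nat.card_eq_fintype_card, card_eq_totient_of_hasEnoughRootsOfUnity]
  have hφ : (0 : ℝ) < N.totient := by exact_mod_cast Nat.totient_pos.mpr (NeZero.pos N)
  have hsq : ∑ χ : DirichletCharacter ℂ N, ‖fourierCoeff F χ‖ ^ 2 ≤ 1 := by
    rw [sum_norm_fourierCoeff_sq, inv_mul_le_one₀ hφ, ← ZMod.card_units_eq_totient]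
    simpa using sum_le_card_nsmul univ _ 1 fun u _ => pow_le_one₀ (norm_nonneg _) (hF u)
  refine Real.le_sqrt_of_sq_le ?_
  calc (∑ χ : DirichletCharacter ℂ N, ‖fourierCoeff F χ‖) ^ 2
      ≤ Fintype.card (DirichletCharacter ℂ N) *
          ∑ χ : DirichletCharacter ℂ N, ‖fourierCoeff F χ‖ ^ 2 :=
        sq_sum_le_card_mul_sum_sq
    _ ≤ N.totient := by rw [hcard]; exact mul_le_of_le_one_right hφ.le hsq

theorem norm_sum_mul_le_sqrt_totient_mul_iSup {ι : Type*} (s : Finset ι) (w : ι → ℂ)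
    (r : ι → ZMod N) (hr : ∀ i ∈ s, w i ≠ 0 → IsUnit (r i)) {F : ZMod N → ℂ}
    (hF : ∀ u : (ZMod N)ˣ, ‖F u‖ ≤ 1) :
    ‖∑ i ∈ s, w i * F (r i)‖
      ≤ √(N.totient : ℝ) * ⨆ χ : DirichletCharacter ℂ N, ‖∑ i ∈ s, w i * χ (r i)‖ := by
  set T : DirichletCharacter ℂ N → ℝ := fun χ => ‖∑ i ∈ s, w i * χ (r i)‖
  have hT : ∀ χ, T χ ≤ ⨆ χ, T χ := le_ciSup (Set.finite_range T).bddAbove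
  have hexpand : ∑ i ∈ s, w i * F (r i)
      = ∑ χ : DirichletCharacter ℂ N, fourierCoeff F χ * ∑ i ∈ s, w i * χ (r i) := by
    simp only [mul_sum]
    rw [sum_comm]
    refine sum_congr rfl fun i hi => ?_
    by_cases hw : w i = 0
    · simp [hw]
    · rw [← sum_fourierCoeff_mul_apply F (hr i hi hw), mul_sum]
      exact sum_congr rfl fun χ _ => by ring
  calc ‖∑ i ∈ s, w i * F (r i)‖
      ≤ ∑ χ : DirichletCharacter ℂ N, ‖fourierCoeff F χ‖ * T χ := by
        rw [hexpand]
        exact (norm_sum_le _ _).trans_eq (sum_congr rfl fun χ _ => norm_mul _ _)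
    _ ≤ ∑ χ : DirichletCharacter ℂ N, ‖fourierCoeff F χ‖ * ⨆ χ, T χ := by gcongr; exact hT _
    _ ≤ √(N.totient : ℝ) * ⨆ χ, T χ := by
        rw [← sum_mul]
        exact mul_le_mul_of_nonneg_right (sum_norm_fourierCoeff_le_sqrt_totient hF)
          ((norm_nonneg _).trans (hT 1))

end DirichletCharacter

lemma Nat.mem_Ioc_div_iff {d : ℕ} (hd : d ≠ 0) (A B m : ℕ) :
    m ∈ Ioc (A / d) (B / d) ↔ d * m ∈ Ioc A B := by
  simp only [mem_Ioc, Nat.div_lt_iff_lt_mul (Nat.pos_of_ne_zero hd),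
    Nat.le_div_iff_mul_le (Nat.pos_of_ne_zero hd), mul_comm d]

lemma Nat.gcd_mul_right_eq_of_dvd_of_coprime {d m q : ℕ} (hd : d ∣ q) (hm : m.gcd q = 1) :
    (d * m).gcd q = d := by
  rw [Nat.Coprime.gcd_mul_right_cancel d hm, Nat.gcd_eq_left hd]

theorem sum_Ioc_eq_sum_divisors_sum_coprime {M : Type*} [AddCommMonoid M] {q : ℕ} (hq : q ≠ 0)
    (A B : ℕ) {f : ℕ → M} (hf : ∀ n, ¬Squarefree n → f n = 0) :
    ∑ n ∈ Ioc A B, f n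
      = ∑ d ∈ q.divisors, ∑ m ∈ Ioc (A / d) (B / d), if m.gcd q = 1 then f (d * m) else 0 := by
  simp only [← sum_filter, sum_sigma']
  symm
  refine sum_bij_ne_zero (fun p _ _ => p.1 * p.2) ?_ ?_ ?_ (fun _ _ _ => rfl)
  · rintro ⟨d, m⟩ hp -
    simp only [mem_sigma, mem_filter, Nat.mem_divisors] at hp
    exact (Nat.mem_Ioc_div_iff (ne_zero_of_dvd_ne_zero hq hp.1.1) A B m).mp hp.2.1
  · rintro ⟨d, m⟩ hp - ⟨d', m'⟩ hp' - (h : d * m = d' * m')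
    simp only [mem_sigma, mem_filter, Nat.mem_divisors] at hp hp'
    have hdd' : d = d' := by
      rw [← Nat.gcd_mul_right_eq_of_dvd_of_coprime hp.1.1 hp.2.2,
        ← Nat.gcd_mul_right_eq_of_dvd_of_coprime hp'.1.1 hp'.2.2, h]
    subst hdd'
    rw [Nat.eq_of_mul_eq_mul_left (Nat.pos_of_dvd_of_pos hp.1.1 (Nat.pos_of_ne_zero hq)) h]
  · intro n hn hfn
    have hsq : Squarefree n := not_not.mp (mt (hf n) hfn)
    have hg : n.gcd q ≠ 0 := Nat.gcd_ne_zero_right hq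
    refine ⟨⟨n.gcd q, n / n.gcd q⟩, ?_, ?_, Nat.mul_div_cancel' (Nat.gcd_dvd_left n q)⟩
    · simp only [mem_sigma, mem_filter, Nat.mem_divisors]
      refine ⟨⟨Nat.gcd_dvd_right n q, hq⟩, ?_, Nat.coprime_div_gcd_of_squarefree hsq hq⟩
      rwa [Nat.mem_Ioc_div_iff hg, Nat.mul_div_cancel' (Nat.gcd_dvd_left n q)]
    · rwa [Nat.mul_div_cancel' (Nat.gcd_dvd_left n q)]

lemma e_natCast_mul_pow_mul_div_add {k d N q : ℕ} [NeZero N] (hk : k ≠ 0) (hd : d ≠ 0)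
    (hdN : d * N = q) (m : ℕ) (a : ℤ) (lam : ℝ) :
    e (((d * m : ℕ) : ℝ) ^ k * (a / q + lam))
      = ZMod.toCircle ((d ^ (k - 1) * a : ZMod N) * (m : ZMod N) ^ k)
        * e ((m : ℝ) ^ k * (d : ℝ) ^ k * lam) := by
  have hphase : ((d * m : ℕ) : ℝ) ^ k * (a / q + lam)
      = ((d ^ (k - 1) * a * m ^ k : ℤ) : ℝ) / N + (m : ℝ) ^ k * (d : ℝ) ^ k * lam := by
    obtain ⟨k, rfl⟩ := Nat.exists_eq_add_one_of_ne_zero hk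
    have hN : (N : ℝ) ≠ 0 := NeZero.ne _
    subst hdN
    push_cast
    field_simp
    ring
  rw [hphase, e_add, e_intCast_div]
  push_cast
  rfl

lemma norm_moebius_le_one (n : ℕ) : ‖(moebius n : ℂ)‖ ≤ 1 := by
  rw [Complex.norm_intCast]
  exact_mod_cast abs_moebius_le_one

theorem norm_sum_coprime_moebius_e_le {k q d : ℕ} (hk : k ≠ 0) (hq : q ≠ 0) (hd : d ∣ q)
    (s : Finset ℕ) (a : ℤ) (lam : ℝ) :
    ‖∑ m ∈ s, if m.gcd q = 1 then
        (moebius (d * m) : ℂ) * e (((d * m : ℕ) : ℝ) ^ k * ((a : ℝ) / q + lam)) else 0‖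
      ≤ √(q : ℝ) * ⨆ χ : DirichletCharacter ℂ (q / d), ‖∑ m ∈ s, if m.gcd q = 1 then
          (moebius m : ℂ) * χ (m : ZMod (q / d)) * e ((m : ℝ) ^ k * (d : ℝ) ^ k * lam) else 0‖ := by
  set N := q / d
  have hdN : d * N = q := Nat.mul_div_cancel' hd
  have : NeZero N := ⟨right_ne_zero_of_mul (hdN ▸ hq)⟩
  set F : ZMod N → ℂ := fun b => ZMod.toCircle ((d ^ (k - 1) * a : ZMod N) * b ^ k)
  set w : ℕ → ℂ := fun m =>
    if m.gcd q = 1 then (moebius m : ℂ) * e ((m : ℝ) ^ k * (d : ℝ) ^ k * lam) else 0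
  have hterm : ∀ m, (if m.gcd q = 1 then
      (moebius (d * m) : ℂ) * e (((d * m : ℕ) : ℝ) ^ k * ((a : ℝ) / q + lam)) else 0)
        = moebius d * (w m * F m) := fun m => by
    by_cases hm : m.gcd q = 1
    · have hdm : d.Coprime m := (Nat.Coprime.coprime_dvd_right hd hm).symm
      simp only [hm, if_true, w, F, isMultiplicative_moebius.map_mul_of_coprime hdm,
        e_natCast_mul_pow_mul_div_add hk (ne_zero_of_dvd_ne_zero hq hd) hdN]
      push_cast
      ring
    · simp [hm, w]
  have hunit : ∀ m ∈ s, w m ≠ 0 → IsUnit (m : ZMod N) := fun m _ hw =>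
    (ZMod.isUnit_iff_coprime m N).mpr <| Nat.Coprime.coprime_dvd_right (Nat.div_dvd_of_dvd hd) <|
      by_contra fun hm => hw (if_neg hm)
  have hchar : ∀ χ : DirichletCharacter ℂ N, ∑ m ∈ s, w m * χ m = ∑ m ∈ s, if m.gcd q = 1 then
      (moebius m : ℂ) * χ (m : ZMod N) * e ((m : ℝ) ^ k * (d : ℝ) ^ k * lam) else 0 := fun χ =>
    sum_congr rfl fun m _ => by simp only [w]; split_ifs <;> ring
  have hφ : √(N.totient : ℝ) ≤ √(q : ℝ) :=
    Real.sqrt_le_sqrt (by exact_mod_cast (Nat.totient_le N).trans (Nat.div_le_self q d))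
  rw [sum_congr rfl fun m _ => hterm m, ← mul_sum, norm_mul]
  calc ‖(moebius d : ℂ)‖ * ‖∑ m ∈ s, w m * F m‖
      ≤ 1 * (√(N.totient : ℝ) * ⨆ χ : DirichletCharacter ℂ N, ‖∑ m ∈ s, w m * χ m‖) :=
        mul_le_mul (norm_moebius_le_one d) (DirichletCharacter.norm_sum_mul_le_sqrt_totient_mul_iSup
          s w _ hunit fun u => (Circle.norm_coe _).le) (norm_nonneg _) zero_le_one
    _ ≤ _ := by
        simp only [one_mul, hchar]
        exact mul_le_mul_of_nonneg_right hφ (Real.iSup_nonneg fun _ => norm_nonneg _)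

/-- Reduction of the short-interval Möbius exponential sum to character sums. -/
theorem S_k_to_character_sums (k : ℕ) (hk : 3 ≤ k) (ε : ℝ) (hε : 0 < ε) :
    ∃ C : ℝ, 0 < C ∧ ∀ (x y : ℝ), 2 ≤ y → y ≤ x →
      ∀ (a : ℤ) (q : ℕ), 1 ≤ q → Int.gcd a q = 1 → ∀ lam : ℝ,
      ‖∑ n ∈ Finset.Ioc ⌊x⌋₊ ⌊x + y⌋₊,
          (moebius n : ℂ) * e ((n : ℝ) ^ k * ((a : ℝ) / q + lam))‖
        ≤ C * (q : ℝ) ^ (1 - 1 / (k : ℝ) + ε) *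
            ∑ d ∈ q.divisors,
              ⨆ χ : DirichletCharacter ℂ (q / d),
                ‖∑ m ∈ Finset.Ioc ⌊x / d⌋₊ ⌊(x + y) / d⌋₊,
                    if Nat.gcd m q = 1 then
                      (moebius m : ℂ) * χ (m : ZMod (q / d))
                        * e ((m : ℝ) ^ k * (d : ℝ) ^ k * lam)
                    else 0‖ := by
  refine ⟨1, one_pos, fun x y _ _ a q hq _ lam => ?_⟩
  have hq0 : q ≠ 0 := Nat.one_le_iff_ne_zero.mp hq
  have hsqrt : √(q : ℝ) ≤ (q : ℝ) ^ (1 - 1 / (k : ℝ) + ε) := by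
    have hk' : (3 : ℝ) ≤ k := by exact_mod_cast hk
    rw [Real.sqrt_eq_rpow]
    refine Real.rpow_le_rpow_of_exponent_le (by exact_mod_cast hq) ?_
    linarith [one_div_le_one_div_of_le (by norm_num) hk']
  simp only [Nat.floor_div_natCast]
  rw [sum_Ioc_eq_sum_divisors_sum_coprime hq0 _ _ fun n hn => by
    rw [moebius_eq_zero_of_not_squarefree hn, Int.cast_zero, zero_mul], one_mul, mul_sum]
  refine (norm_sum_le _ _).trans (sum_le_sum fun d hd => ?_)
  exact (norm_sum_coprime_moebius_e_le (by omega) hq0 (Nat.dvd_of_mem_divisors hd) _ a lam).trans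
    (mul_le_mul_of_nonneg_right hsqrt (Real.iSup_nonneg fun _ => norm_nonneg _))
end
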